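/- arXiv:2602.23967 — 2 statements merged into one kernel-verified Lean document; each statement's English description precedes it below -/
import Mathlib

section
/- (Primal infeasibility certificate, sufficiency.) Let A be an m×n real matrix and let l_v, u_v ∈ ℝⁿ with l_v ≤ u_v and l_c, u_c ∈ ℝᵐ with l_c ≤ u_c. If there exists y ∈ ℝᵐ such that p(−Aᵀy; l_v, u_v) + p(y; l_c, u_c) < 0, then there is no x ∈ ℝⁿ satisfying both l_v ≤ x ≤ u_v and l_c ≤ Ax ≤ u_c. -/
open Matrix

/-- `p(z; l, u) = ⟨u, z⁺⟩ − ⟨l, z⁻⟩`, where `z⁺ = max(z, 0)` and `z⁻ = max(−z, 0)`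
componentwise. -/
noncomputable def pSupport {m : ℕ} (z l u : Fin m → ℝ) : ℝ :=
  (u ⬝ᵥ fun i => max (z i) 0) - (l ⬝ᵥ fun i => max (-z i) 0)

lemma dot_le_pSupport {m : ℕ} (z l u x : Fin m → ℝ) (hl : l ≤ x) (hu : x ≤ u) :
    z ⬝ᵥ x ≤ pSupport z l u := by
  unfold pSupport
  simp only [dotProduct, ← Finset.sum_sub_distrib]
  apply Finset.sum_le_sum
  intro i _
  rcases le_or_gt 0 (z i) with h | h
  · have : max (-z i) 0 = 0 := max_eq_right (by linarith)
    rw [max_eq_left h, this]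
    nlinarith [hl i, hu i]
  · have : max (z i) 0 = 0 := max_eq_right h.le
    rw [this, max_eq_left (by linarith : (0:ℝ) ≤ -z i)]
    nlinarith [hl i, hu i]

/-- Primal infeasibility certificate (sufficiency): if there exists `y` with
`p(−Aᵀy; l_v, u_v) + p(y; l_c, u_c) < 0`, then no `x` satisfies
`l_v ≤ x ≤ u_v` and `l_c ≤ Ax ≤ u_c`. -/
theorem infeasibility_certificate_sufficient {n m : ℕ}
    (A : Matrix (Fin m) (Fin n) ℝ)
    (lv uv : Fin n → ℝ) (hv : lv ≤ uv)
    (lc uc : Fin m → ℝ) (hc : lc ≤ uc)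
    (y : Fin m → ℝ)
    (hy : pSupport (-(Aᵀ.mulVec y)) lv uv + pSupport y lc uc < 0) :
    ¬ ∃ x : Fin n → ℝ, lv ≤ x ∧ x ≤ uv ∧ lc ≤ A.mulVec x ∧ A.mulVec x ≤ uc := by
  rintro ⟨x, h1, h2, h3, h4⟩
  have b1 := dot_le_pSupport (-(Aᵀ.mulVec y)) lv uv x h1 h2
  have b2 := dot_le_pSupport y lc uc (A.mulVec x) h3 h4
  have key : (-(Aᵀ.mulVec y)) ⬝ᵥ x + y ⬝ᵥ (A.mulVec x) = 0 := by
    rw [Matrix.dotProduct_mulVec, ← Matrix.mulVec_transpose]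
    simp [neg_dotProduct]
  linarith
end

section
/- (A saddle point of the primal–dual Lagrangian yields a primal optimum.) Let Q be an n×n real symmetric positive semidefinite matrix, c ∈ ℝⁿ, A an m×n real matrix, l_v, u_v ∈ ℝⁿ with l_v ≤ u_v, and l_c, u_c ∈ ℝᵐ with l_c ≤ u_c. Define L(x, y) = (1/2)xᵀQx + cᵀx + ⟨y, Ax⟩ − p(y; l_c, u_c). Suppose x* satisfies l_v ≤ x* ≤ u_v and y* ∈ ℝᵐ are such that L(x*, y) ≤ L(x*, y*) ≤ L(x, y*) for all y ∈ ℝᵐ and all x with l_v ≤ x ≤ u_v. Then x* is primal feasible, i.e., l_c ≤ A x* ≤ u_c, and x* minimizes f(x) = (1/2)xᵀQx + cᵀx over {x : l_v ≤ x ≤ u_v, l_c ≤ Ax ≤ u_c}. -/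
open Matrix

lemma pSupport_zero {m : ℕ} (l u : Fin m → ℝ) : pSupport 0 l u = 0 := by
  simp [pSupport, dotProduct]

lemma pSupport_single {m : ℕ} (i : Fin m) (t : ℝ) (l u : Fin m → ℝ) :
    pSupport (Pi.single i t) l u = u i * max t 0 - l i * max (-t) 0 := by
  have h1 : (fun j => max ((Pi.single i t : Fin m → ℝ) j) 0) = (Pi.single i (max t 0) : Fin m → ℝ) := by
    funext j
    rcases eq_or_ne j i with rfl | h <;> simp [Pi.single_eq_of_ne, *]
  have h2 : (fun j => max (-((Pi.single i t : Fin m → ℝ) j)) 0) = (Pi.single i (max (-t) 0) : Fin m → ℝ) := by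
    funext j
    rcases eq_or_ne j i with rfl | h <;> simp [Pi.single_eq_of_ne, *]
  simp only [pSupport, h1, h2, dotProduct_single]

lemma pSupport_two_smul {m : ℕ} (y l u : Fin m → ℝ) :
    pSupport (fun i => 2 * y i) l u = 2 * pSupport y l u := by
  have h1 : ∀ a : ℝ, max (2 * a) 0 = 2 * max a 0 := by
    intro a; rw [mul_max_of_nonneg _ _ (by norm_num : (0:ℝ) ≤ 2), mul_zero]
  have h2 : ∀ a : ℝ, max (-(2 * a)) 0 = 2 * max (-a) 0 := by
    intro a
    rw [mul_max_of_nonneg _ _ (by norm_num : (0:ℝ) ≤ 2), mul_zero, mul_neg]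
  simp only [pSupport, h1, h2, dotProduct, Finset.mul_sum]
  ring_nf
  rw [Finset.sum_mul, Finset.sum_mul]

lemma dot_le_pSupport_s16 {m : ℕ} (y v l u : Fin m → ℝ) (h1 : l ≤ v) (h2 : v ≤ u) :
    y ⬝ᵥ v ≤ pSupport y l u := by
  simp only [pSupport, dotProduct, ← Finset.sum_sub_distrib]
  apply Finset.sum_le_sum
  intro i _
  rcases le_total 0 (y i) with hy | hy
  · rw [max_eq_left hy, max_eq_right (by linarith), mul_zero, sub_zero, mul_comm (u i)]
    exact mul_le_mul_of_nonneg_left (h2 i) hy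
  · rw [max_eq_right hy, max_eq_left (by linarith), mul_zero, zero_sub, ← neg_mul,
      mul_comm (-(l i))]
    have := mul_le_mul_of_nonneg_left (h1 i) (neg_nonneg.mpr hy)
    linarith [this]

/-- A saddle point of the primal–dual Lagrangian
`L(x, y) = (1/2)xᵀQx + cᵀx + ⟨y, Ax⟩ − p(y; l_c, u_c)` over
`{x : l_v ≤ x ≤ u_v} × ℝᵐ` yields a primal optimum: `x*` is primal feasible
(`l_c ≤ Ax* ≤ u_c`) and minimizes `f(x) = (1/2)xᵀQx + cᵀx` over the feasible set. -/
theorem saddle_point_implies_primal_optimal {n m : ℕ}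
    (Q : Matrix (Fin n) (Fin n) ℝ) (hQ : Q.PosSemidef)
    (c : Fin n → ℝ) (A : Matrix (Fin m) (Fin n) ℝ)
    (lv uv : Fin n → ℝ) (hv : lv ≤ uv)
    (lc uc : Fin m → ℝ) (hc : lc ≤ uc)
    (L : (Fin n → ℝ) → (Fin m → ℝ) → ℝ)
    (hL : ∀ x y, L x y = (1 / 2) * (x ⬝ᵥ Q.mulVec x) + c ⬝ᵥ x
        + y ⬝ᵥ A.mulVec x - pSupport y lc uc)
    (xstar : Fin n → ℝ) (hx1 : lv ≤ xstar) (hx2 : xstar ≤ uv)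
    (ystar : Fin m → ℝ)
    (hsaddle_y : ∀ y : Fin m → ℝ, L xstar y ≤ L xstar ystar)
    (hsaddle_x : ∀ x : Fin n → ℝ, lv ≤ x → x ≤ uv → L xstar ystar ≤ L x ystar) :
    (lc ≤ A.mulVec xstar ∧ A.mulVec xstar ≤ uc) ∧
      ∀ x : Fin n → ℝ, lv ≤ x → x ≤ uv → lc ≤ A.mulVec x → A.mulVec x ≤ uc →
        (1 / 2) * (xstar ⬝ᵥ Q.mulVec xstar) + c ⬝ᵥ xstar
          ≤ (1 / 2) * (x ⬝ᵥ Q.mulVec x) + c ⬝ᵥ x := by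
  set v := A.mulVec xstar with hv'
  -- key : g(y*) = 0
  have hg : ∀ y : Fin m → ℝ,
      y ⬝ᵥ v - pSupport y lc uc ≤ ystar ⬝ᵥ v - pSupport ystar lc uc := by
    intro y
    have := hsaddle_y y
    rw [hL, hL] at this
    linarith
  have key : ystar ⬝ᵥ v - pSupport ystar lc uc = 0 := by
    have h0 := hg 0
    rw [pSupport_zero, zero_dotProduct] at h0
    have h2 := hg (fun i => 2 * ystar i)
    rw [pSupport_two_smul] at h2
    have h2' : (fun i => 2 * ystar i) ⬝ᵥ v = 2 * (ystar ⬝ᵥ v) := by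
      simp [dotProduct, Finset.mul_sum, mul_assoc]
    rw [h2'] at h2
    linarith
  have feas : lc ≤ v ∧ v ≤ uc := by
    constructor
    · intro i
      have h := hg (Pi.single i (-1))
      rw [pSupport_single, key, single_dotProduct] at h
      simp at h
      linarith
    · intro i
      have h := hg (Pi.single i 1)
      rw [pSupport_single, key, single_dotProduct] at h
      simp at h
      linarith
  refine ⟨feas, ?_⟩
  intro x hlx hxu hlcx hxuc
  have h := hsaddle_x x hlx hxu
  rw [hL, hL] at h
  have hb := dot_le_pSupport_s16 ystar (A.mulVec x) lc uc hlcx hxuc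
  linarith
end
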